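/- Let M_1, …, M_{n_w} ∈ ℝ^{n_x × n_z} with n_z = n_x + n_u, W ∈ ℝ^{n_w × n_w} symmetric, E and E* as defined, K ∈ ℝ^{n_u × n_x} a gain with L_K = [I, Kᵀ] and π_K(X) = L_Kᵀ X L_K, and H ∈ ℝ^{n_z × n_z} symmetric. Suppose P ∈ ℝ^{n_x × n_x} is symmetric and satisfies P = L_K (H + E*(P)) L_Kᵀ, and let (X_t)_{t ∈ ℕ} satisfy X_{t+1} = E(π_K(X_t)). If tr[P X_t] → 0 as t → ∞, then the series Σ_{t=0}^{∞} tr[H · π_K(X_t)] converges with sum tr[P X_0]; i.e., the infinite-horizon closed-loop cost equals the value function J_π(X_0) = tr[P X_0]. -/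

import Mathlib

/-! By the Lyapunov equation and the adjointness `tr[P E(Z)] = tr[E*(P) Z]`, each stage cost
`tr[H π_K(X_t)]` equals `tr[P X_t] - tr[P X_{t+1}]`, so the partial sums telescope to
`tr[P X_0] - tr[P X_T]`, which tends to `tr[P X_0]`. -/

open Matrix BigOperators

/-- The completely positive operator `E(Z) = Σ_{i,j} W i j • M i * Z * (M j)ᵀ`. -/
def cpE {n_w n_x n_u : ℕ} (W : Matrix (Fin n_w) (Fin n_w) ℝ)
    (M : Fin n_w → Matrix (Fin n_x) (Fin n_x ⊕ Fin n_u) ℝ)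
    (Z : Matrix (Fin n_x ⊕ Fin n_u) (Fin n_x ⊕ Fin n_u) ℝ) :
    Matrix (Fin n_x) (Fin n_x) ℝ :=
  ∑ i : Fin n_w, ∑ j : Fin n_w, W i j • (M i * Z * (M j)ᵀ)

/-- Its adjoint `E*(P) = Σ_{i,j} W i j • (M i)ᵀ * P * M j`. -/
def cpEstar {n_w n_x n_u : ℕ} (W : Matrix (Fin n_w) (Fin n_w) ℝ)
    (M : Fin n_w → Matrix (Fin n_x) (Fin n_x ⊕ Fin n_u) ℝ)
    (P : Matrix (Fin n_x) (Fin n_x) ℝ) :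
    Matrix (Fin n_x ⊕ Fin n_u) (Fin n_x ⊕ Fin n_u) ℝ :=
  ∑ i : Fin n_w, ∑ j : Fin n_w, W i j • ((M i)ᵀ * P * M j)

/-- The matrix `L_K = [I, Kᵀ]` associated with a gain `K`. -/
def gainL {n_x n_u : ℕ} (K : Matrix (Fin n_u) (Fin n_x) ℝ) :
    Matrix (Fin n_x) (Fin n_x ⊕ Fin n_u) ℝ :=
  Matrix.fromCols 1 Kᵀ

/-- The policy map `π_K(X) = L_Kᵀ X L_K`. -/
def policy {n_x n_u : ℕ} (K : Matrix (Fin n_u) (Fin n_x) ℝ)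
    (X : Matrix (Fin n_x) (Fin n_x) ℝ) :
    Matrix (Fin n_x ⊕ Fin n_u) (Fin n_x ⊕ Fin n_u) ℝ :=
  (gainL K)ᵀ * X * gainL K

theorem tendsto_sum_range_of_telescoping {G : Type*} [AddCommGroup G] [TopologicalSpace G]
    [IsTopologicalAddGroup G] {f g : ℕ → G} (hfg : ∀ t, f t = g t - g (t + 1))
    (hg : Filter.Tendsto g Filter.atTop (nhds 0)) :
    Filter.Tendsto (fun T => ∑ t ∈ Finset.range T, f t) Filter.atTop (nhds (g 0)) := by
  simp only [hfg, Finset.sum_range_sub']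
  simpa using hg.const_sub (g 0)

theorem trace_mul_mul_transpose_mul {R m n : Type*} [Fintype m] [Fintype n]
    [NonUnitalCommSemiring R] (A : Matrix m n R) (Q : Matrix n n R) (Y : Matrix m m R) :
    (A * Q * Aᵀ * Y).trace = (Q * (Aᵀ * Y * A)).trace := by
  rw [Matrix.mul_assoc (A * Q), trace_mul_comm, ← Matrix.mul_assoc, trace_mul_comm,
    Matrix.mul_assoc]

theorem trace_mul_cpE {n_w n_x n_u : ℕ} {W : Matrix (Fin n_w) (Fin n_w) ℝ} (hW : W.IsSymm)
    (M : Fin n_w → Matrix (Fin n_x) (Fin n_x ⊕ Fin n_u) ℝ) (P : Matrix (Fin n_x) (Fin n_x) ℝ)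
    (Z : Matrix (Fin n_x ⊕ Fin n_u) (Fin n_x ⊕ Fin n_u) ℝ) :
    (P * cpE W M Z).trace = (cpEstar W M P * Z).trace := by
  simp only [cpE, cpEstar, Matrix.mul_sum, Matrix.sum_mul, trace_sum, Matrix.mul_smul,
    Matrix.smul_mul, trace_smul]
  rw [Finset.sum_comm]
  refine Finset.sum_congr rfl fun i _ => Finset.sum_congr rfl fun j _ => ?_
  rw [hW.apply i j, ← Matrix.mul_assoc, trace_mul_comm, Matrix.mul_assoc, Matrix.mul_assoc,
    trace_mul_cycle', ← Matrix.mul_assoc]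

theorem trace_mul_policy_of_lyapunov {n_w n_x n_u : ℕ} {W : Matrix (Fin n_w) (Fin n_w) ℝ}
    (hW : W.IsSymm) {M : Fin n_w → Matrix (Fin n_x) (Fin n_x ⊕ Fin n_u) ℝ}
    {K : Matrix (Fin n_u) (Fin n_x) ℝ} {H : Matrix (Fin n_x ⊕ Fin n_u) (Fin n_x ⊕ Fin n_u) ℝ}
    {P : Matrix (Fin n_x) (Fin n_x) ℝ} (hLyap : P = gainL K * (H + cpEstar W M P) * (gainL K)ᵀ)
    (Y : Matrix (Fin n_x) (Fin n_x) ℝ) :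
    (H * policy K Y).trace = (P * Y).trace - (P * cpE W M (policy K Y)).trace := by
  have hvalue : (P * Y).trace = ((H + cpEstar W M P) * policy K Y).trace := by
    conv_lhs => rw [hLyap]
    exact trace_mul_mul_transpose_mul _ _ _
  rw [trace_mul_cpE hW, hvalue, Matrix.add_mul, trace_add]
  ring

theorem closed_loop_infinite_cost_general (n_w n_x n_u : ℕ)
    (W : Matrix (Fin n_w) (Fin n_w) ℝ) (hW : W.IsSymm)
    (M : Fin n_w → Matrix (Fin n_x) (Fin n_x ⊕ Fin n_u) ℝ)
    (K : Matrix (Fin n_u) (Fin n_x) ℝ)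
    (H : Matrix (Fin n_x ⊕ Fin n_u) (Fin n_x ⊕ Fin n_u) ℝ)
    (P : Matrix (Fin n_x) (Fin n_x) ℝ)
    (hLyap : P = gainL K * (H + cpEstar W M P) * (gainL K)ᵀ)
    (X : ℕ → Matrix (Fin n_x) (Fin n_x) ℝ)
    (hdyn : ∀ t, X (t + 1) = cpE W M (policy K (X t)))
    (hlim : Filter.Tendsto (fun t => (P * X t).trace) Filter.atTop (nhds 0)) :
    Filter.Tendsto (fun T => ∑ t ∈ Finset.range T, (H * policy K (X t)).trace)
      Filter.atTop (nhds ((P * X 0).trace)) :=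
  tendsto_sum_range_of_telescoping
    (fun t => by rw [hdyn t, trace_mul_policy_of_lyapunov hW hLyap]) hlim

/-- If `P` solves the Lyapunov equation `P = L_K (H + E*(P)) L_Kᵀ`, the
closed-loop second moments satisfy `X_{t+1} = E(π_K(X_t))` and
`tr[P X_t] → 0`, then the infinite-horizon closed-loop cost
`Σ_{t=0}^{∞} tr[H π_K(X_t)]` converges with sum `tr[P X_0]`. -/
theorem closed_loop_infinite_cost (n_w n_x n_u : ℕ)
    (W : Matrix (Fin n_w) (Fin n_w) ℝ) (hW : W.IsSymm)
    (M : Fin n_w → Matrix (Fin n_x) (Fin n_x ⊕ Fin n_u) ℝ)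
    (K : Matrix (Fin n_u) (Fin n_x) ℝ)
    (H : Matrix (Fin n_x ⊕ Fin n_u) (Fin n_x ⊕ Fin n_u) ℝ) (hH : H.IsSymm)
    (P : Matrix (Fin n_x) (Fin n_x) ℝ) (hP : P.IsSymm)
    (hLyap : P = gainL K * (H + cpEstar W M P) * (gainL K)ᵀ)
    (X : ℕ → Matrix (Fin n_x) (Fin n_x) ℝ) (hXsymm : ∀ t, (X t).IsSymm)
    (hdyn : ∀ t, X (t + 1) = cpE W M (policy K (X t)))
    (hlim : Filter.Tendsto (fun t => (P * X t).trace) Filter.atTop (nhds 0)) :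
    Filter.Tendsto (fun T => ∑ t ∈ Finset.range T, (H * policy K (X t)).trace)
      Filter.atTop (nhds ((P * X 0).trace)) :=
  closed_loop_infinite_cost_general n_w n_x n_u W hW M K H P hLyap X hdyn hlim
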